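/- arXiv:2110.09102 — 2 statements merged into one kernel-verified Lean document; each statement's English description precedes it below -/
import Mathlib

section
/- Let A be an sa-tight set and B an sb-tight set. If a ∈ A* ∩ B and b ∈ B* ∩ A, then A* ∩ B is an as-tight set and B* ∩ A is a bs-tight set. -/
open Set

variable {V : Type*} [Fintype V] [DecidableEq V]

/-- The boundary (neighborhood) of a vertex set: vertices outside `A` adjacent to `A`. -/
def bdry (G : SimpleGraph V) (A : Set V) : Set V := {v | v ∉ A ∧ ∃ a ∈ A, G.Adj a v}

/-- The "node complement" `A* = V \ (A ∪ ∂A)`. -/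
def nstar (G : SimpleGraph V) (A : Set V) : Set V := (A ∪ bdry G A)ᶜ

/-- `C` is a vertex set separating `s` from `t`. -/
def IsSep (G : SimpleGraph V) (s t : V) (C : Set V) : Prop :=
  s ∉ C ∧ t ∉ C ∧ ∀ p : G.Walk s t, ∃ v ∈ C, v ∈ p.support

/-- `κ(s,t)`: minimum size of an `s`–`t` vertex cut. -/
noncomputable def kappa (G : SimpleGraph V) (s t : V) : ℕ :=
  sInf {n | ∃ C : Set V, C.ncard = n ∧ IsSep G s t C}

/-- A set is tight if `|∂A| = k` and `A* ≠ ∅`. -/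
def Tight (G : SimpleGraph V) (k : ℕ) (A : Set V) : Prop :=
  (bdry G A).ncard = k ∧ (nstar G A).Nonempty

/-- A set is small if `|A| ≤ (n - k)/2`. -/
def SmallSet (k : ℕ) (A : Set V) : Prop := 2 * A.ncard + k ≤ Fintype.card V

/-- `G` is `k`-connected. -/
def KConn (G : SimpleGraph V) (k : ℕ) : Prop :=
  k + 1 ≤ Fintype.card V ∧
    ∀ s t : V, s ≠ t → ∀ C : Set V, IsSep G s t C → k ≤ C.ncard

/-- degree of a vertex -/
noncomputable def deg (G : SimpleGraph V) (v : V) : ℕ := (G.neighborSet v).ncard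

/-- `X` is an `st`-tight set: `s ∈ X`, `t ∈ X*` and `|∂X| = κ(s,t)`. -/
def TightST (G : SimpleGraph V) (s t : V) (X : Set V) : Prop :=
  s ∈ X ∧ t ∈ nstar G X ∧ (bdry G X).ncard = kappa G s t

/-- `R_s`: intersection of all small tight sets containing `s`. -/
def Rmin (G : SimpleGraph V) (k : ℕ) (s : V) : Set V :=
  ⋂₀ {A : Set V | Tight G k A ∧ SmallSet k A ∧ s ∈ A}

/-- Two sets are laminar if disjoint or one contains the other. -/
def Laminar (X Y : Set V) : Prop := Disjoint X Y ∨ X ⊆ Y ∨ Y ⊆ X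

/-- `d`-degeneracy: every nonempty vertex subset has a vertex with at most `d`
neighbors inside it. -/
def Degenerate (G : SimpleGraph V) (d : ℕ) : Prop :=
  ∀ W : Set V, W.Nonempty → ∃ v ∈ W, (G.neighborSet v ∩ W).ncard ≤ d

/-- The set of vertices reachable from `s` avoiding `C`. -/
def Reach (G : SimpleGraph V) (C : Set V) (s : V) : Set V :=
  {v | ∃ p : G.Walk s v, ∀ u ∈ p.support, u ∉ C}

set_option linter.unusedSectionVars false

lemma mem_nstar' {G : SimpleGraph V} {X : Set V} {v : V} :
    v ∈ nstar G X ↔ v ∉ X ∧ v ∉ bdry G X := by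
  simp [nstar]

lemma nstar_no_adj {G : SimpleGraph V} {X : Set V} {u v : V}
    (hu : u ∈ X) (hv : v ∈ nstar G X) : ¬ G.Adj u v := by
  intro h
  rcases mem_nstar'.1 hv with ⟨h1, h2⟩
  exact h2 ⟨h1, u, hu, h⟩

lemma walk_hits_bdry {G : SimpleGraph V} (X : Set V) {x y : V} (p : G.Walk x y)
    (hx : x ∈ X) (hy : y ∉ X) : ∃ v ∈ bdry G X, v ∈ p.support := by
  induction p with
  | nil => exact absurd hx hy
  | @cons u w z h q ih =>
    by_cases hw : w ∈ X
    · obtain ⟨v, hv1, hv2⟩ := ih hw hy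
      exact ⟨v, hv1, by simp [SimpleGraph.Walk.support_cons, hv2]⟩
    · exact ⟨w, ⟨hw, u, hx, h⟩, by simp [SimpleGraph.Walk.support_cons]⟩

lemma isSep_bdry {G : SimpleGraph V} {X : Set V} {x y : V}
    (hx : x ∈ X) (hy : y ∈ nstar G X) : IsSep G x y (bdry G X) := by
  refine ⟨fun h => h.1 hx, (mem_nstar'.1 hy).2, fun p => ?_⟩
  exact walk_hits_bdry X p hx (mem_nstar'.1 hy).1

lemma kappa_le_bdry {G : SimpleGraph V} {X : Set V} {x y : V}
    (hx : x ∈ X) (hy : y ∈ nstar G X) : kappa G x y ≤ (bdry G X).ncard :=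
  Nat.sInf_le ⟨bdry G X, rfl, isSep_bdry hx hy⟩

lemma kappa_symm (G : SimpleGraph V) (x y : V) : kappa G x y = kappa G y x := by
  have : ∀ u v : V, {n | ∃ C : Set V, C.ncard = n ∧ IsSep G u v C}
      ⊆ {n | ∃ C : Set V, C.ncard = n ∧ IsSep G v u C} := by
    rintro u v n ⟨C, hC, h1, h2, h3⟩
    exact ⟨C, hC, h2, h1, fun p => by
      obtain ⟨w, hw1, hw2⟩ := h3 p.reverse
      exact ⟨w, hw1, by simpa [SimpleGraph.Walk.support_reverse] using hw2⟩⟩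
  unfold kappa
  exact congrArg sInf (Set.Subset.antisymm (this x y) (this y x))

lemma bdryX_subset {G : SimpleGraph V} {A B : Set V} :
    bdry G (nstar G A ∩ B) ⊆ (bdry G B ∩ nstar G A) ∪ (bdry G A ∩ (B ∪ bdry G B)) := by
  rintro v ⟨hvX, u, ⟨huA, huB⟩, hadj⟩
  by_cases hvA : v ∈ A
  · exact absurd hadj.symm (nstar_no_adj hvA huA)
  · by_cases hvBd : v ∈ bdry G A
    · right; refine ⟨hvBd, ?_⟩
      by_cases hvB : v ∈ B
      · exact Or.inl hvB
      · exact Or.inr ⟨hvB, u, huB, hadj⟩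
    · have hvAs : v ∈ nstar G A := mem_nstar'.2 ⟨hvA, hvBd⟩
      have hvB : v ∉ B := fun h => hvX ⟨hvAs, h⟩
      exact Or.inl ⟨⟨hvB, u, huB, hadj⟩, hvAs⟩

lemma bdry_count {G : SimpleGraph V} {A B : Set V} :
    (bdry G A ∩ (B ∪ bdry G B)).ncard + (bdry G A ∩ nstar G B).ncard ≤ (bdry G A).ncard := by
  have hdisj : Disjoint (bdry G A ∩ (B ∪ bdry G B)) (bdry G A ∩ nstar G B) := by
    rw [Set.disjoint_left]
    rintro v ⟨-, h1⟩ ⟨-, h2⟩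
    rcases mem_nstar'.1 h2 with ⟨n1, n2⟩
    rcases h1 with h | h
    · exact n1 h
    · exact n2 h
  rw [← Set.ncard_union_eq hdisj (Set.toFinite _) (Set.toFinite _)]
  exact Set.ncard_le_ncard (by rintro v (h | h) <;> exact h.1) (Set.toFinite _)

theorem stmt11 (G : SimpleGraph V) (s a b : V)
    (hsa : ¬ G.Adj s a) (hsb : ¬ G.Adj s b) (hna : s ≠ a) (hnb : s ≠ b)
    (A B : Set V) (hA : TightST G s a A) (hB : TightST G s b B)
    (hmema : a ∈ nstar G A ∩ B) (hmemb : b ∈ nstar G B ∩ A) :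
    TightST G a s (nstar G A ∩ B) ∧ TightST G b s (nstar G B ∩ A) := by
  obtain ⟨hsA, haA, hcardA⟩ := hA
  obtain ⟨hsB, hbB, hcardB⟩ := hB
  have hsX : s ∈ nstar G (nstar G A ∩ B) := by
    rw [mem_nstar']
    refine ⟨fun hs => (mem_nstar'.1 hs.1).1 hsA, ?_⟩
    rintro ⟨-, u, ⟨hu1, -⟩, hadj⟩
    exact nstar_no_adj hsA hu1 hadj.symm
  have hsY : s ∈ nstar G (nstar G B ∩ A) := by
    rw [mem_nstar']
    refine ⟨fun hs => (mem_nstar'.1 hs.1).1 hsB, ?_⟩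
    rintro ⟨-, u, ⟨hu1, -⟩, hadj⟩
    exact nstar_no_adj hsB hu1 hadj.symm
  have kXa : kappa G a s ≤ (bdry G (nstar G A ∩ B)).ncard := kappa_le_bdry hmema hsX
  have kYb : kappa G b s ≤ (bdry G (nstar G B ∩ A)).ncard := kappa_le_bdry hmemb hsY
  have hup : (bdry G (nstar G A ∩ B)).ncard + (bdry G (nstar G B ∩ A)).ncard ≤
      kappa G a s + kappa G b s := by
    have h1 := Set.ncard_le_ncard (bdryX_subset (G := G) (A := A) (B := B)) (Set.toFinite _)
    have h2 := Set.ncard_le_ncard (bdryX_subset (G := G) (A := B) (B := A)) (Set.toFinite _)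
    have u1 := Set.ncard_union_le (bdry G B ∩ nstar G A) (bdry G A ∩ (B ∪ bdry G B))
    have u2 := Set.ncard_union_le (bdry G A ∩ nstar G B) (bdry G B ∩ (A ∪ bdry G A))
    have c1 := bdry_count (G := G) (A := A) (B := B)
    have c2 := bdry_count (G := G) (A := B) (B := A)
    have e1 : (bdry G A).ncard = kappa G a s := hcardA.trans (kappa_symm G s a)
    have e2 : (bdry G B).ncard = kappa G b s := hcardB.trans (kappa_symm G s b)
    omega
  exact ⟨⟨hmema, hsX, by omega⟩, ⟨hmemb, hsY, by omega⟩⟩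
end

section
/- Fix a vertex s of a graph G and let T = {t : st ∉ E, κ(s,t) ≤ k}. Let 𝓡_s be the family of inclusion-minimal members of {R_{st} : t ∈ T, |R_{st}| ≤ |R_{ts}|}. Then |𝓡_s| ≤ 2k+1. -/
open Set

variable {V : Type*} [Fintype V] [DecidableEq V]

/-!
For distinct members `X = R_{sa}` and `Y = R_{sb}` of `𝓡_s` one has `a ∈ ∂Y` or `b ∈ ∂X`.
Otherwise each of `a, b` lies inside or beyond the other set. If `a ∈ Y*`, submodularity of
`|∂·|` makes `X ∩ Y` an `sb`-tight set, so `Y ⊆ X` against minimality (symmetrically if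
`b ∈ X*`). If `a ∈ Y` and `b ∈ X`, posimodularity makes `X ∩ Y*` a `bs`-tight set, whence
`|Y| ≤ |R_{bs}| ≤ |X ∩ Y*| < |X|`, and symmetrically `|X| < |Y|`. Choosing one witness per
member and charging every pair of members to a boundary of size `κ ≤ k` gives
`m(m-1)/2 ≤ mk` for `m = |𝓡_s|`.
-/

section

omit [Fintype V] [DecidableEq V]

variable {G : SimpleGraph V} {A B X Y : Set V} {a b s u v : V}

theorem mem_nstar_iff : v ∈ nstar G A ↔ v ∉ A ∧ ∀ a ∈ A, ¬G.Adj a v := by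
  simp only [nstar, bdry, mem_compl_iff, mem_union, mem_ofPred_eq, not_or, not_and, not_exists]
  tauto

theorem mem_or_mem_nstar_of_notMem_bdry (h : v ∉ bdry G A) : v ∈ A ∨ v ∈ nstar G A := by
  by_cases hv : v ∈ A
  · exact .inl hv
  · exact .inr (by simp [nstar, hv, h])

theorem isSep_bdry_s16 (hu : u ∈ A) (hv : v ∈ nstar G A) : IsSep G u v (bdry G A) := by
  refine ⟨fun h => h.1 hu, fun h => hv (.inr h), fun p => ?_⟩
  obtain ⟨d, hd, hd₁, hd₂⟩ := p.exists_boundary_dart A hu (mem_nstar_iff.mp hv).1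
  exact ⟨d.snd, ⟨hd₂, d.fst, hd₁, d.adj⟩, p.dart_snd_mem_support_of_mem_darts hd⟩

theorem kappa_le_ncard_bdry (hu : u ∈ A) (hv : v ∈ nstar G A) :
    kappa G u v ≤ (bdry G A).ncard :=
  Nat.sInf_le ⟨bdry G A, rfl, isSep_bdry_s16 hu hv⟩

theorem IsSep.symm {C : Set V} (h : IsSep G u v C) : IsSep G v u C := by
  refine ⟨h.2.1, h.1, fun p => ?_⟩
  obtain ⟨w, hw, hwp⟩ := h.2.2 p.reverse
  exact ⟨w, hw, by simpa using hwp⟩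

theorem kappa_comm (G : SimpleGraph V) (u v : V) : kappa G u v = kappa G v u := by
  simp only [kappa]
  congr 1
  ext n
  constructor <;> rintro ⟨C, hC, hsep⟩ <;> exact ⟨C, hC, hsep.symm⟩

theorem mem_nstar_inter_of_mem_nstar_right (hv : v ∈ nstar G B) : v ∈ nstar G (A ∩ B) := by
  simp only [mem_nstar_iff, mem_inter_iff] at hv ⊢
  exact ⟨fun h => hv.1 h.2, fun a ha => hv.2 a ha.2⟩

theorem mem_nstar_union (hA : v ∈ nstar G A) (hB : v ∈ nstar G B) :
    v ∈ nstar G (A ∪ B) := by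
  simp only [mem_nstar_iff, mem_union] at hA hB ⊢
  exact ⟨by tauto, fun a ha => ha.elim (hA.2 a) (hB.2 a)⟩

theorem mem_nstar_inter_nstar (hv : v ∈ B) : v ∈ nstar G (A ∩ nstar G B) := by
  simp only [mem_nstar_iff, mem_inter_iff] at hv ⊢
  exact ⟨fun h => h.2.1 hv, fun a ha hadj => ha.2.2 v hv hadj.symm⟩

theorem bdry_inter_subset : bdry G (A ∩ B) ⊆ bdry G A ∪ bdry G B := by
  rintro v ⟨hv, u, ⟨huA, huB⟩, hadj⟩
  by_cases hvA : v ∈ A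
  · exact .inr ⟨fun hvB => hv ⟨hvA, hvB⟩, u, huB, hadj⟩
  · exact .inl ⟨hvA, u, huA, hadj⟩

theorem bdry_union_subset : bdry G (A ∪ B) ⊆ bdry G A ∪ bdry G B := by
  rintro v ⟨hv, u, hu | hu, hadj⟩
  · exact .inl ⟨fun h => hv (.inl h), u, hu, hadj⟩
  · exact .inr ⟨fun h => hv (.inr h), u, hu, hadj⟩

theorem bdry_inter_inter_bdry_union_subset :
    bdry G (A ∩ B) ∩ bdry G (A ∪ B) ⊆ bdry G A ∩ bdry G B := by
  rintro v ⟨⟨-, u, ⟨huA, huB⟩, hadj⟩, hv, -⟩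
  exact ⟨⟨fun h => hv (.inl h), u, huA, hadj⟩, ⟨fun h => hv (.inr h), u, huB, hadj⟩⟩

theorem bdry_inter_nstar_subset : bdry G (A ∩ nstar G B) ⊆ bdry G A ∪ bdry G B := by
  rintro v ⟨hv, u, ⟨huA, huB⟩, hadj⟩
  by_cases hvA : v ∈ A
  · have hvB : v ∉ B := fun h => (mem_nstar_iff.mp huB).2 v h hadj.symm
    by_contra h
    exact hv ⟨hvA, (mem_or_mem_nstar_of_notMem_bdry fun h' => h (.inr h')).resolve_left hvB⟩
  · exact .inl ⟨hvA, u, huA, hadj⟩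

theorem bdry_inter_nstar_inter_subset :
    bdry G (A ∩ nstar G B) ∩ bdry G (B ∩ nstar G A) ⊆ bdry G A ∩ bdry G B := by
  rintro v ⟨⟨-, u, ⟨huA, huB⟩, hu⟩, ⟨-, w, ⟨hwB, hwA⟩, hw⟩⟩
  exact ⟨⟨fun h => (mem_nstar_iff.mp hwA).2 v h hw.symm, u, huA, hu⟩,
    ⟨fun h => (mem_nstar_iff.mp huB).2 v h hu.symm, w, hwB, hw⟩⟩

variable [Finite V]

theorem ncard_add_ncard_le_of_subset {S T P Q : Set V}
    (hS : S ⊆ P ∪ Q) (hT : T ⊆ P ∪ Q) (hST : S ∩ T ⊆ P ∩ Q) :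
    S.ncard + T.ncard ≤ P.ncard + Q.ncard := by
  rw [← ncard_union_add_ncard_inter S T, ← ncard_union_add_ncard_inter P Q]
  exact add_le_add (ncard_le_ncard (union_subset hS hT)) (ncard_le_ncard hST)

theorem ncard_bdry_inter_add_ncard_bdry_union_le (G : SimpleGraph V) (A B : Set V) :
    (bdry G (A ∩ B)).ncard + (bdry G (A ∪ B)).ncard ≤ (bdry G A).ncard + (bdry G B).ncard :=
  ncard_add_ncard_le_of_subset bdry_inter_subset bdry_union_subset
    bdry_inter_inter_bdry_union_subset

theorem ncard_bdry_inter_nstar_add_le (G : SimpleGraph V) (A B : Set V) :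
    (bdry G (A ∩ nstar G B)).ncard + (bdry G (B ∩ nstar G A)).ncard
      ≤ (bdry G A).ncard + (bdry G B).ncard :=
  ncard_add_ncard_le_of_subset bdry_inter_nstar_subset
    (bdry_inter_nstar_subset.trans (union_comm _ _).subset) bdry_inter_nstar_inter_subset

theorem TightST.inter (hX : TightST G s a X) (hY : TightST G s b Y) (ha : a ∈ nstar G Y) :
    TightST G s b (X ∩ Y) := by
  obtain ⟨hsX, haX, hX⟩ := hX
  obtain ⟨hsY, hbY, hY⟩ := hY
  have hb : b ∈ nstar G (X ∩ Y) := mem_nstar_inter_of_mem_nstar_right hbY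
  have h₁ := kappa_le_ncard_bdry (mem_inter hsX hsY) hb
  have h₂ := kappa_le_ncard_bdry (.inl hsX) (mem_nstar_union haX ha)
  have h₃ := ncard_bdry_inter_add_ncard_bdry_union_le G X Y
  exact ⟨mem_inter hsX hsY, hb, by omega⟩

theorem TightST.inter_nstar (hX : TightST G s a X) (hY : TightST G s b Y)
    (haY : a ∈ Y) (hbX : b ∈ X) : TightST G b s (X ∩ nstar G Y) := by
  obtain ⟨hsX, haX, hX⟩ := hX
  obtain ⟨hsY, hbY, hY⟩ := hY
  have h₁ := kappa_le_ncard_bdry (mem_inter hbX hbY) (mem_nstar_inter_nstar hsY)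
  have h₂ := kappa_le_ncard_bdry (mem_inter haY haX) (mem_nstar_inter_nstar hsX)
  have h₃ := ncard_bdry_inter_nstar_add_le G X Y
  have h₄ := kappa_comm G s a
  have h₅ := kappa_comm G s b
  exact ⟨mem_inter hbX hbY, mem_nstar_inter_nstar hsY, by omega⟩

theorem ncard_inter_nstar_lt (hsX : s ∈ X) (hsY : s ∈ Y) :
    (X ∩ nstar G Y).ncard < X.ncard :=
  ncard_lt_ncard <| inter_subset_left.ssubset_of_not_subset fun h =>
    (mem_nstar_iff.mp (h hsX).2).1 hsY

theorem mem_bdry_or_mem_bdry_of_isLeast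
    (hX : IsLeast {Z | TightST G s a Z} X) (hY : IsLeast {Z | TightST G s b Z} Y)
    (hA : IsLeast {Z | TightST G a s Z} A) (hB : IsLeast {Z | TightST G b s Z} B)
    (hXA : X.ncard ≤ A.ncard) (hYB : Y.ncard ≤ B.ncard) (hXY : ¬X ⊆ Y) (hYX : ¬Y ⊆ X) :
    a ∈ bdry G Y ∨ b ∈ bdry G X := by
  have hXt : TightST G s a X := hX.1
  have hYt : TightST G s b Y := hY.1
  by_contra! h
  rcases mem_or_mem_nstar_of_notMem_bdry h.2 with hbX | hbX
  · rcases mem_or_mem_nstar_of_notMem_bdry h.1 with haY | haY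
    · have hBX := ncard_le_ncard (hB.2 (hXt.inter_nstar hYt haY hbX))
      have hAY := ncard_le_ncard (hA.2 (hYt.inter_nstar hXt hbX haY))
      have hX' := ncard_inter_nstar_lt (G := G) hXt.1 hYt.1
      have hY' := ncard_inter_nstar_lt (G := G) hYt.1 hXt.1
      omega
    · exact hYX ((hY.2 (hXt.inter hYt haY)).trans inter_subset_left)
  · exact hXY ((hX.2 (hYt.inter hXt hbX)).trans inter_subset_left)

end

theorem ncard_le_two_mul_add_one_of_pairwise {α : Type*} {S : Set α} (hS : S.Finite)
    {r : α → α → Prop} {k : ℕ} (htot : S.Pairwise fun x y => r x y ∨ r y x)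
    (hdeg : ∀ y ∈ S, {x ∈ S | r x y}.ncard ≤ k) : S.ncard ≤ 2 * k + 1 := by
  classical
  obtain ⟨F, rfl⟩ := hS.exists_finset_coe
  set D := {p ∈ F ×ˢ F | r p.1 p.2}
  have hoff : F.offDiag ⊆ D ∪ D.image Prod.swap := by
    intro p hp
    obtain ⟨hp₁, hp₂, hne⟩ := Finset.mem_offDiag.mp hp
    rcases htot hp₁ hp₂ hne with h | h
    · exact Finset.mem_union_left _ (by simp [D, hp₁, hp₂, h])
    · exact Finset.mem_union_right _
        (Finset.mem_image.mpr ⟨p.swap, by simp [D, hp₁, hp₂, h], rfl⟩)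
  have hD : D.card ≤ F.card * k := by
    calc D.card = ∑ y ∈ F, {x ∈ F | r x y}.card := by
          simp only [D, Finset.card_filter, Finset.sum_product_right]
      _ ≤ ∑ _y ∈ F, k := Finset.sum_le_sum fun y hy => by
          simpa [← Finset.coe_filter] using hdeg y hy
      _ = F.card * k := by rw [Finset.sum_const, smul_eq_mul]
  have hcount : F.card * F.card - F.card ≤ F.card * (2 * k) := by
    calc F.card * F.card - F.card = F.offDiag.card := F.offDiag_card.symm
      _ ≤ (D ∪ D.image Prod.swap).card := Finset.card_le_card hoff
      _ ≤ D.card + (D.image Prod.swap).card := Finset.card_union_le _ _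
      _ ≤ F.card * (2 * k) := by linarith [Finset.card_image_le (s := D) (f := Prod.swap)]
  rw [ncard_coe_finset]
  rcases Nat.eq_zero_or_pos F.card with h | h
  · omega
  · rw [← Nat.mul_sub_one] at hcount
    have := Nat.le_of_mul_le_mul_left hcount h
    omega

theorem stmt16_general (G : SimpleGraph V) (k : ℕ) (s : V)
    (R : V → V → Set V)
    (hR : ∀ t : V, s ≠ t → ¬ G.Adj s t → kappa G s t ≤ k →
      (TightST G s t (R s t) ∧ ∀ X : Set V, TightST G s t X → R s t ⊆ X) ∧
      (TightST G t s (R t s) ∧ ∀ X : Set V, TightST G t s X → R t s ⊆ X)) :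
    {X : Set V |
        (∃ t : V, s ≠ t ∧ ¬ G.Adj s t ∧ kappa G s t ≤ k ∧
          X = R s t ∧ (R s t).ncard ≤ (R t s).ncard) ∧
        ∀ Y : Set V,
          (∃ t : V, s ≠ t ∧ ¬ G.Adj s t ∧ kappa G s t ≤ k ∧
            Y = R s t ∧ (R s t).ncard ≤ (R t s).ncard) → Y ⊆ X → Y = X}.ncard
      ≤ 2 * k + 1 := by
  set 𝓡 := {X : Set V | _}
  set T := {t | s ≠ t ∧ ¬G.Adj s t ∧ kappa G s t ≤ k ∧ (R s t).ncard ≤ (R t s).ncard ∧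
    R s t ∈ 𝓡}
  have hT : R s '' T = 𝓡 := by
    ext X
    refine ⟨fun ⟨t, ht, hX⟩ => hX ▸ ht.2.2.2.2, fun hX => ?_⟩
    obtain ⟨t, hst, hadj, hk, rfl, hcard⟩ := hX.1
    exact ⟨t, ⟨hst, hadj, hk, hcard, hX⟩, rfl⟩
  obtain ⟨W, hWT, hW⟩ := exists_subset_bijOn T (R s)
  rw [← hT, ← hW.ncard_eq]
  refine ncard_le_two_mul_add_one_of_pairwise (toFinite W)
    (r := fun a b => a ∈ bdry G (R s b)) (fun a ha b hb hab => ?_) (fun b hb => ?_)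
  · obtain ⟨hsa, hadja, hka, hcarda, h𝓡a⟩ := hWT ha
    obtain ⟨hsb, hadjb, hkb, hcardb, h𝓡b⟩ := hWT hb
    have hne : R s a ≠ R s b := hW.injOn.ne ha hb hab
    have hRa := hR a hsa hadja hka
    have hRb := hR b hsb hadjb hkb
    exact mem_bdry_or_mem_bdry_of_isLeast hRa.1 hRb.1 hRa.2 hRb.2 hcarda hcardb
      (fun h => hne (h𝓡b.2 _ ⟨a, hsa, hadja, hka, rfl, hcarda⟩ h))
      (fun h => hne (h𝓡a.2 _ ⟨b, hsb, hadjb, hkb, rfl, hcardb⟩ h).symm)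
  · obtain ⟨hsb, hadjb, hkb, -⟩ := hWT hb
    calc {a ∈ W | a ∈ bdry G (R s b)}.ncard ≤ (bdry G (R s b)).ncard :=
          ncard_le_ncard fun _ h => h.2
      _ = kappa G s b := (hR b hsb hadjb hkb).1.1.2.2
      _ ≤ k := hkb

theorem stmt16 (G : SimpleGraph V) (k : ℕ) (hk : 1 ≤ k) (s : V)
    (R : V → V → Set V)
    (hR : ∀ t : V, s ≠ t → ¬ G.Adj s t → kappa G s t ≤ k →
      (TightST G s t (R s t) ∧ ∀ X : Set V, TightST G s t X → R s t ⊆ X) ∧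
      (TightST G t s (R t s) ∧ ∀ X : Set V, TightST G t s X → R t s ⊆ X)) :
    {X : Set V |
        (∃ t : V, s ≠ t ∧ ¬ G.Adj s t ∧ kappa G s t ≤ k ∧
          X = R s t ∧ (R s t).ncard ≤ (R t s).ncard) ∧
        ∀ Y : Set V,
          (∃ t : V, s ≠ t ∧ ¬ G.Adj s t ∧ kappa G s t ≤ k ∧
            Y = R s t ∧ (R s t).ncard ≤ (R t s).ncard) → Y ⊆ X → Y = X}.ncard
      ≤ 2 * k + 1 :=
  stmt16_general G k s R hR
end
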